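/- Let l₀,…,l₄ be ℂ-linearly independent linear forms in R and let M be the 6×6 skew-symmetric matrix over R with rows (0, l₃, 0, 0, l₀, l₁), (−l₃, 0, 0, −l₀, 0, l₂), (0, 0, 0, −l₁, −l₂, 0), (0, l₀, l₁, 0, l₄, 0), (−l₀, 0, l₂, −l₄, 0, 0), (−l₁, −l₂, 0, 0, 0, 0) (type (a)). Then Pf(M) = 0; for every 6×6 skew-symmetric matrix M′ all of whose entries are linear forms there is a unique cubic Φ(M′) ∈ R such that Pf(M + εM′) = ε·Φ(M′) in R[ε]/(ε²); the assignment M′ ↦ Φ(M′) is ℂ-linear from the ℂ-vector space of 6×6 skew-symmetric matrices of linear forms to the ℂ-vector space of cubics; and the ℂ-dimension of the range of Φ equals 28. -/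

import Mathlib

open MvPolynomial Matrix

noncomputable section

/-- The polynomial ring `R = ℂ[x₀,…,x₄]`. -/
abbrev Rp : Type := MvPolynomial (Fin 5) ℂ

/-- The sub-Pfaffian `q_{αβ}(N)` of a `6 × 6` matrix: for `α < β` it is
`N_{ij}N_{kl} − N_{ik}N_{jl} + N_{il}N_{jk}` where `i < j < k < l` are the elements of
`{0,…,5} ∖ {α,β}`. -/
def subPf {A : Type*} [CommRing A] (N : Matrix (Fin 6) (Fin 6) A) (α β : Fin 6) : A :=
  match (List.finRange 6).filter (fun i => decide (i ≠ α) && decide (i ≠ β)) with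
  | [i, j, k, m] => N i j * N k m - N i k * N j m + N i m * N j k
  | _ => 0

/-- The Pfaffian of a `6 × 6` skew-symmetric matrix. -/
def pf {A : Type*} [CommRing A] (N : Matrix (Fin 6) (Fin 6) A) : A :=
  N 0 1 * subPf N 0 1 - N 0 2 * subPf N 0 2 + N 0 3 * subPf N 0 3
    - N 0 4 * subPf N 0 4 + N 0 5 * subPf N 0 5

/-- The matrix `M + ε M'` over `R[ε]/(ε²)`, realised via dual numbers. -/
def jet1 (M M' : Matrix (Fin 6) (Fin 6) Rp) : Matrix (Fin 6) (Fin 6) (DualNumber Rp) :=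
  Matrix.of fun i j =>
    TrivSqZeroExt.inl (M i j) + DualNumber.eps * TrivSqZeroExt.inl (M' i j)

/-- The `ℂ`-vector space of `6 × 6` skew-symmetric matrices all of whose entries are
linear forms. -/
def SkewLin : Submodule ℂ (Matrix (Fin 6) (Fin 6) Rp) where
  carrier := {N | Nᵀ = -N ∧ ∀ i j, (N i j).IsHomogeneous 1}
  add_mem' := by
    rintro a b ⟨ha1, ha2⟩ ⟨hb1, hb2⟩
    exact ⟨by rw [Matrix.transpose_add, ha1, hb1, neg_add],
      fun i j => (ha2 i j).add (hb2 i j)⟩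
  zero_mem' := ⟨by simp, fun i j => by
    simpa using MvPolynomial.isHomogeneous_zero (Fin 5) ℂ 1⟩
  smul_mem' := by
    rintro c a ⟨ha1, ha2⟩
    refine ⟨by rw [Matrix.transpose_smul, ha1, smul_neg], fun i j => ?_⟩
    have h : (c • a) i j = MvPolynomial.C c * a i j := by
      simp [Matrix.smul_apply, MvPolynomial.smul_eq_C_mul]
    rw [h]
    exact (ha2 i j).C_mul c

/-- The `ℂ`-vector space of cubic forms in `R`. -/
abbrev Cubics : Submodule ℂ Rp := homogeneousSubmodule (Fin 5) ℂ 3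


set_option maxRecDepth 40000
set_option synthInstance.maxHeartbeats 1000000
set_option maxHeartbeats 1000000

lemma pf_expand {A : Type*} [CommRing A] (N : Matrix (Fin 6) (Fin 6) A) :
    pf N = N 0 1 * (N 2 3 * N 4 5 - N 2 4 * N 3 5 + N 2 5 * N 3 4)
      - N 0 2 * (N 1 3 * N 4 5 - N 1 4 * N 3 5 + N 1 5 * N 3 4)
      + N 0 3 * (N 1 2 * N 4 5 - N 1 4 * N 2 5 + N 1 5 * N 2 4)
      - N 0 4 * (N 1 2 * N 3 5 - N 1 3 * N 2 5 + N 1 5 * N 2 3)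
      + N 0 5 * (N 1 2 * N 3 4 - N 1 3 * N 2 4 + N 1 4 * N 2 3) := rfl



lemma degree_one_single {d : Fin 5 →₀ ℕ} (hd : d.degree = 1) : ∃ j, d = Finsupp.single j 1 := by
  have hne : d ≠ 0 := by
    intro h
    rw [h, map_zero] at hd
    exact one_ne_zero hd.symm
  obtain ⟨j, hj⟩ : ∃ j, d j ≠ 0 := by
    by_contra h
    push_neg at h
    exact hne (Finsupp.ext fun k => h k)
  have hj1 : d j = 1 := le_antisymm (hd ▸ Finsupp.le_degree j d) (Nat.one_le_iff_ne_zero.mpr hj)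
  refine ⟨j, ?_⟩
  ext k
  rcases eq_or_ne k j with rfl | hkj
  · simp [hj1]
  · simp only [Finsupp.single_apply, if_neg (Ne.symm hkj)]
    by_contra hk
    have hjk : ({j, k} : Finset (Fin 5)) ⊆ d.support := by
      intro t ht
      simp only [Finset.mem_insert, Finset.mem_singleton] at ht
      rcases ht with rfl | rfl <;> simp [Finsupp.mem_support_iff, hj, hk]
    have hsum : d j + d k ≤ d.degree := by
      rw [Finsupp.degree, ← Finset.sum_pair hkj.symm]
      exact Finset.sum_le_sum_of_subset hjk
    omega

lemma homog_one_eq {p : Rp} (hp : p.IsHomogeneous 1) :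
    p = ∑ j, (coeff (Finsupp.single j 1) p) • X j := by
  apply MvPolynomial.ext
  intro d
  rw [coeff_sum]
  simp only [coeff_smul, coeff_X', smul_eq_mul, mul_ite, mul_one, mul_zero]
  by_cases hd : ∃ j, d = Finsupp.single j 1
  · obtain ⟨j0, rfl⟩ := hd
    rw [Finset.sum_eq_single j0]
    · simp
    · intro b _ hb
      rw [if_neg]
      intro h
      exact hb (Finsupp.single_left_injective one_ne_zero h)
    · simp
  · rw [Finset.sum_eq_zero, hp.coeff_eq_zero]
    · intro h
      obtain ⟨j, hj⟩ := degree_one_single h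
      exact hd ⟨j, hj⟩
    · intro b _
      rw [if_neg]
      intro h
      exact hd ⟨b, h.symm⟩


lemma psi_exists (l : Fin 5 → Rp) (hind : LinearIndependent ℂ l)
    (hrep : ∀ i, l i = ∑ j, (coeff (Finsupp.single j 1) (l i)) • X j) :
    ∃ ψ : Rp →ₐ[ℂ] Rp, ∀ i, ψ (l i) = X i := by
  set A : Matrix (Fin 5) (Fin 5) ℂ := Matrix.of fun i j => coeff (Finsupp.single j 1) (l i) with hA
  have hrep' : ∀ i, l i = ∑ j, A i j • X j := fun i => hrep i
  have hAunit : IsUnit A := by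
    rw [← Matrix.linearIndependent_rows_iff_isUnit]
    rw [Fintype.linearIndependent_iff]
    intro g hg
    have hz : ∀ j, (∑ i, g i * A i j) = 0 := by
      intro j
      have := congrFun hg j
      simpa [Finset.sum_apply] using this
    have : ∑ i, g i • l i = 0 := by
      have h2 : ∑ i, g i • l i = ∑ j, (∑ i, g i * A i j) • X j := by
        simp_rw [hrep', Finset.smul_sum, smul_smul, Finset.sum_smul]
        rw [Finset.sum_comm]
      rw [h2]
      simp [hz]
    exact (Fintype.linearIndependent_iff.mp hind) g this
  have hABone : A * A⁻¹ = 1 := Matrix.mul_nonsing_inv A (Matrix.isUnit_iff_isUnit_det A |>.mp hAunit)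
  refine ⟨aeval (fun j => ∑ k, (A⁻¹ j k) • X k), fun i => ?_⟩
  rw [hrep' i, map_sum]
  simp_rw [map_smul, aeval_X]
  have h3 : ∑ j, A i j • ∑ k, A⁻¹ j k • (X k : Rp) = ∑ k, (∑ j, A i j * A⁻¹ j k) • X k := by
    simp_rw [Finset.smul_sum, smul_smul, Finset.sum_smul]
    rw [Finset.sum_comm]
  rw [h3]
  have h4 : ∀ k, (∑ j, A i j * A⁻¹ j k) = (1 : Matrix (Fin 5) (Fin 5) ℂ) i k := by
    intro k; rw [← hABone, Matrix.mul_apply]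
  simp_rw [h4, Matrix.one_apply]
  simp


def mexp (f : Fin 5 → ℕ) : Rp := monomial (Finsupp.equivFunOnFinite.symm f) 1

lemma efof_add (f g : Fin 5 → ℕ) : Finsupp.equivFunOnFinite.symm (f + g)
    = Finsupp.equivFunOnFinite.symm f + Finsupp.equivFunOnFinite.symm g := by
  ext k
  simp

lemma mexp_mul (f g : Fin 5 → ℕ) : mexp f * mexp g = mexp (f + g) := by
  rw [mexp, mexp, mexp, monomial_mul, one_mul, efof_add]

lemma X_eq_mexp (i : Fin 5) : (X i : Rp) = mexp (Pi.single i 1) := by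
  rw [X, mexp]
  have : Finsupp.equivFunOnFinite.symm (Pi.single i 1) = Finsupp.single i 1 := by
    ext k
    simp [Finsupp.single_apply, Pi.single_apply, eq_comm]
  rw [this]

lemma coeff_mexp (f g : Fin 5 → ℕ) :
    coeff (Finsupp.equivFunOnFinite.symm g) (mexp f) = if f = g then 1 else 0 := by
  rw [mexp, coeff_monomial]
  congr 1
  simp [Finsupp.equivFunOnFinite.symm.injective.eq_iff]


lemma eps_inl_inj {F G : Rp} (h : DualNumber.eps * TrivSqZeroExt.inl F
    = DualNumber.eps * TrivSqZeroExt.inl G) : F = G := by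
  have h2 := congrArg TrivSqZeroExt.snd h
  simpa only [DualNumber.eps, TrivSqZeroExt.snd_mul, TrivSqZeroExt.fst_inr,
    TrivSqZeroExt.snd_inl, TrivSqZeroExt.fst_inl, TrivSqZeroExt.snd_inr, smul_zero, zero_smul,
    zero_add, MulOpposite.smul_eq_mul_unop, MulOpposite.unop_op, one_mul] using h2




/-- The derivative of the Pfaffian at the type (a) matrix, in direction `a`. -/
def DD (l : Fin 5 → Rp) (a : Matrix (Fin 6) (Fin 6) Rp) : Rp :=
  -(l 2 * l 4) * a 0 2 + -(l 2 * l 2) * a 0 3 + l 1 * l 2 * a 0 4 + -(l 0 * l 2) * a 0 5 + l 1 * l 4 * a 1 2 + l 1 * l 2 * a 1 3 + -(l 1 * l 1) * a 1 4 + l 0 * l 1 * a 1 5 + -(l 0 * l 2) * a 2 3 + l 0 * l 1 * a 2 4 + (l 3 * l 4 - l 0 * l 0) * a 2 5 + l 2 * l 3 * a 3 5 + -(l 1 * l 3) * a 4 5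

lemma DD_def (l : Fin 5 → Rp) (a : Matrix (Fin 6) (Fin 6) Rp) :
    DD l a = -(l 2 * l 4) * a 0 2 + -(l 2 * l 2) * a 0 3 + l 1 * l 2 * a 0 4 + -(l 0 * l 2) * a 0 5 + l 1 * l 4 * a 1 2 + l 1 * l 2 * a 1 3 + -(l 1 * l 1) * a 1 4 + l 0 * l 1 * a 1 5 + -(l 0 * l 2) * a 2 3 + l 0 * l 1 * a 2 4 + (l 3 * l 4 - l 0 * l 0) * a 2 5 + l 2 * l 3 * a 3 5 + -(l 1 * l 3) * a 4 5 := rfl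

lemma eM01 (l : Fin 5 → Rp) : (!![0, l 3, 0, 0, l 0, l 1; -l 3, 0, 0, -l 0, 0, l 2; 0, 0, 0, -l 1, -l 2, 0; 0, l 0, l 1, 0, l 4, 0; -l 0, 0, l 2, -l 4, 0, 0; -l 1, -l 2, 0, 0, 0, 0] : Matrix (Fin 6) (Fin 6) Rp) 0 1 = l 3 := rfl
lemma eM02 (l : Fin 5 → Rp) : (!![0, l 3, 0, 0, l 0, l 1; -l 3, 0, 0, -l 0, 0, l 2; 0, 0, 0, -l 1, -l 2, 0; 0, l 0, l 1, 0, l 4, 0; -l 0, 0, l 2, -l 4, 0, 0; -l 1, -l 2, 0, 0, 0, 0] : Matrix (Fin 6) (Fin 6) Rp) 0 2 = 0 := rfl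
lemma eM03 (l : Fin 5 → Rp) : (!![0, l 3, 0, 0, l 0, l 1; -l 3, 0, 0, -l 0, 0, l 2; 0, 0, 0, -l 1, -l 2, 0; 0, l 0, l 1, 0, l 4, 0; -l 0, 0, l 2, -l 4, 0, 0; -l 1, -l 2, 0, 0, 0, 0] : Matrix (Fin 6) (Fin 6) Rp) 0 3 = 0 := rfl
lemma eM04 (l : Fin 5 → Rp) : (!![0, l 3, 0, 0, l 0, l 1; -l 3, 0, 0, -l 0, 0, l 2; 0, 0, 0, -l 1, -l 2, 0; 0, l 0, l 1, 0, l 4, 0; -l 0, 0, l 2, -l 4, 0, 0; -l 1, -l 2, 0, 0, 0, 0] : Matrix (Fin 6) (Fin 6) Rp) 0 4 = l 0 := rfl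
lemma eM05 (l : Fin 5 → Rp) : (!![0, l 3, 0, 0, l 0, l 1; -l 3, 0, 0, -l 0, 0, l 2; 0, 0, 0, -l 1, -l 2, 0; 0, l 0, l 1, 0, l 4, 0; -l 0, 0, l 2, -l 4, 0, 0; -l 1, -l 2, 0, 0, 0, 0] : Matrix (Fin 6) (Fin 6) Rp) 0 5 = l 1 := rfl
lemma eM12 (l : Fin 5 → Rp) : (!![0, l 3, 0, 0, l 0, l 1; -l 3, 0, 0, -l 0, 0, l 2; 0, 0, 0, -l 1, -l 2, 0; 0, l 0, l 1, 0, l 4, 0; -l 0, 0, l 2, -l 4, 0, 0; -l 1, -l 2, 0, 0, 0, 0] : Matrix (Fin 6) (Fin 6) Rp) 1 2 = 0 := rfl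
lemma eM13 (l : Fin 5 → Rp) : (!![0, l 3, 0, 0, l 0, l 1; -l 3, 0, 0, -l 0, 0, l 2; 0, 0, 0, -l 1, -l 2, 0; 0, l 0, l 1, 0, l 4, 0; -l 0, 0, l 2, -l 4, 0, 0; -l 1, -l 2, 0, 0, 0, 0] : Matrix (Fin 6) (Fin 6) Rp) 1 3 = -l 0 := rfl
lemma eM14 (l : Fin 5 → Rp) : (!![0, l 3, 0, 0, l 0, l 1; -l 3, 0, 0, -l 0, 0, l 2; 0, 0, 0, -l 1, -l 2, 0; 0, l 0, l 1, 0, l 4, 0; -l 0, 0, l 2, -l 4, 0, 0; -l 1, -l 2, 0, 0, 0, 0] : Matrix (Fin 6) (Fin 6) Rp) 1 4 = 0 := rfl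
lemma eM15 (l : Fin 5 → Rp) : (!![0, l 3, 0, 0, l 0, l 1; -l 3, 0, 0, -l 0, 0, l 2; 0, 0, 0, -l 1, -l 2, 0; 0, l 0, l 1, 0, l 4, 0; -l 0, 0, l 2, -l 4, 0, 0; -l 1, -l 2, 0, 0, 0, 0] : Matrix (Fin 6) (Fin 6) Rp) 1 5 = l 2 := rfl
lemma eM23 (l : Fin 5 → Rp) : (!![0, l 3, 0, 0, l 0, l 1; -l 3, 0, 0, -l 0, 0, l 2; 0, 0, 0, -l 1, -l 2, 0; 0, l 0, l 1, 0, l 4, 0; -l 0, 0, l 2, -l 4, 0, 0; -l 1, -l 2, 0, 0, 0, 0] : Matrix (Fin 6) (Fin 6) Rp) 2 3 = -l 1 := rfl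
lemma eM24 (l : Fin 5 → Rp) : (!![0, l 3, 0, 0, l 0, l 1; -l 3, 0, 0, -l 0, 0, l 2; 0, 0, 0, -l 1, -l 2, 0; 0, l 0, l 1, 0, l 4, 0; -l 0, 0, l 2, -l 4, 0, 0; -l 1, -l 2, 0, 0, 0, 0] : Matrix (Fin 6) (Fin 6) Rp) 2 4 = -l 2 := rfl
lemma eM25 (l : Fin 5 → Rp) : (!![0, l 3, 0, 0, l 0, l 1; -l 3, 0, 0, -l 0, 0, l 2; 0, 0, 0, -l 1, -l 2, 0; 0, l 0, l 1, 0, l 4, 0; -l 0, 0, l 2, -l 4, 0, 0; -l 1, -l 2, 0, 0, 0, 0] : Matrix (Fin 6) (Fin 6) Rp) 2 5 = 0 := rfl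
lemma eM34 (l : Fin 5 → Rp) : (!![0, l 3, 0, 0, l 0, l 1; -l 3, 0, 0, -l 0, 0, l 2; 0, 0, 0, -l 1, -l 2, 0; 0, l 0, l 1, 0, l 4, 0; -l 0, 0, l 2, -l 4, 0, 0; -l 1, -l 2, 0, 0, 0, 0] : Matrix (Fin 6) (Fin 6) Rp) 3 4 = l 4 := rfl
lemma eM35 (l : Fin 5 → Rp) : (!![0, l 3, 0, 0, l 0, l 1; -l 3, 0, 0, -l 0, 0, l 2; 0, 0, 0, -l 1, -l 2, 0; 0, l 0, l 1, 0, l 4, 0; -l 0, 0, l 2, -l 4, 0, 0; -l 1, -l 2, 0, 0, 0, 0] : Matrix (Fin 6) (Fin 6) Rp) 3 5 = 0 := rfl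
lemma eM45 (l : Fin 5 → Rp) : (!![0, l 3, 0, 0, l 0, l 1; -l 3, 0, 0, -l 0, 0, l 2; 0, 0, 0, -l 1, -l 2, 0; 0, l 0, l 1, 0, l 4, 0; -l 0, 0, l 2, -l 4, 0, 0; -l 1, -l 2, 0, 0, 0, 0] : Matrix (Fin 6) (Fin 6) Rp) 4 5 = 0 := rfl

lemma pfM_zero (l : Fin 5 → Rp) (M : Matrix (Fin 6) (Fin 6) Rp)
    (hM : M = !![0, l 3, 0, 0, l 0, l 1; -l 3, 0, 0, -l 0, 0, l 2; 0, 0, 0, -l 1, -l 2, 0; 0, l 0, l 1, 0, l 4, 0; -l 0, 0, l 2, -l 4, 0, 0; -l 1, -l 2, 0, 0, 0, 0]) : pf M = 0 := by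
  subst hM
  rw [pf_expand, eM01, eM02, eM03, eM04, eM05, eM12, eM13, eM14, eM15, eM23, eM24, eM25, eM34, eM35, eM45]
  ring

lemma key (l : Fin 5 → Rp) (M : Matrix (Fin 6) (Fin 6) Rp)
    (hM : M = !![0, l 3, 0, 0, l 0, l 1; -l 3, 0, 0, -l 0, 0, l 2; 0, 0, 0, -l 1, -l 2, 0; 0, l 0, l 1, 0, l 4, 0; -l 0, 0, l 2, -l 4, 0, 0; -l 1, -l 2, 0, 0, 0, 0])
    (a : Matrix (Fin 6) (Fin 6) Rp) :
    pf (jet1 M a) = DualNumber.eps * TrivSqZeroExt.inl (DD l a) := by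
  subst hM
  rw [pf_expand]
  simp only [jet1, Matrix.of_apply]
  have h01 : (![![0, l 3, 0, 0, l 0, l 1], ![-l 3, 0, 0, -l 0, 0, l 2], ![0, 0, 0, -l 1, -l 2, 0], ![0, l 0, l 1, 0, l 4, 0], ![-l 0, 0, l 2, -l 4, 0, 0], ![-l 1, -l 2, 0, 0, 0, 0]] : Fin 6 → Fin 6 → Rp) 0 1 = l 3 := rfl
  have h02 : (![![0, l 3, 0, 0, l 0, l 1], ![-l 3, 0, 0, -l 0, 0, l 2], ![0, 0, 0, -l 1, -l 2, 0], ![0, l 0, l 1, 0, l 4, 0], ![-l 0, 0, l 2, -l 4, 0, 0], ![-l 1, -l 2, 0, 0, 0, 0]] : Fin 6 → Fin 6 → Rp) 0 2 = 0 := rfl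
  have h03 : (![![0, l 3, 0, 0, l 0, l 1], ![-l 3, 0, 0, -l 0, 0, l 2], ![0, 0, 0, -l 1, -l 2, 0], ![0, l 0, l 1, 0, l 4, 0], ![-l 0, 0, l 2, -l 4, 0, 0], ![-l 1, -l 2, 0, 0, 0, 0]] : Fin 6 → Fin 6 → Rp) 0 3 = 0 := rfl
  have h04 : (![![0, l 3, 0, 0, l 0, l 1], ![-l 3, 0, 0, -l 0, 0, l 2], ![0, 0, 0, -l 1, -l 2, 0], ![0, l 0, l 1, 0, l 4, 0], ![-l 0, 0, l 2, -l 4, 0, 0], ![-l 1, -l 2, 0, 0, 0, 0]] : Fin 6 → Fin 6 → Rp) 0 4 = l 0 := rfl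
  have h05 : (![![0, l 3, 0, 0, l 0, l 1], ![-l 3, 0, 0, -l 0, 0, l 2], ![0, 0, 0, -l 1, -l 2, 0], ![0, l 0, l 1, 0, l 4, 0], ![-l 0, 0, l 2, -l 4, 0, 0], ![-l 1, -l 2, 0, 0, 0, 0]] : Fin 6 → Fin 6 → Rp) 0 5 = l 1 := rfl
  have h12 : (![![0, l 3, 0, 0, l 0, l 1], ![-l 3, 0, 0, -l 0, 0, l 2], ![0, 0, 0, -l 1, -l 2, 0], ![0, l 0, l 1, 0, l 4, 0], ![-l 0, 0, l 2, -l 4, 0, 0], ![-l 1, -l 2, 0, 0, 0, 0]] : Fin 6 → Fin 6 → Rp) 1 2 = 0 := rfl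
  have h13 : (![![0, l 3, 0, 0, l 0, l 1], ![-l 3, 0, 0, -l 0, 0, l 2], ![0, 0, 0, -l 1, -l 2, 0], ![0, l 0, l 1, 0, l 4, 0], ![-l 0, 0, l 2, -l 4, 0, 0], ![-l 1, -l 2, 0, 0, 0, 0]] : Fin 6 → Fin 6 → Rp) 1 3 = -l 0 := rfl
  have h14 : (![![0, l 3, 0, 0, l 0, l 1], ![-l 3, 0, 0, -l 0, 0, l 2], ![0, 0, 0, -l 1, -l 2, 0], ![0, l 0, l 1, 0, l 4, 0], ![-l 0, 0, l 2, -l 4, 0, 0], ![-l 1, -l 2, 0, 0, 0, 0]] : Fin 6 → Fin 6 → Rp) 1 4 = 0 := rfl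
  have h15 : (![![0, l 3, 0, 0, l 0, l 1], ![-l 3, 0, 0, -l 0, 0, l 2], ![0, 0, 0, -l 1, -l 2, 0], ![0, l 0, l 1, 0, l 4, 0], ![-l 0, 0, l 2, -l 4, 0, 0], ![-l 1, -l 2, 0, 0, 0, 0]] : Fin 6 → Fin 6 → Rp) 1 5 = l 2 := rfl
  have h23 : (![![0, l 3, 0, 0, l 0, l 1], ![-l 3, 0, 0, -l 0, 0, l 2], ![0, 0, 0, -l 1, -l 2, 0], ![0, l 0, l 1, 0, l 4, 0], ![-l 0, 0, l 2, -l 4, 0, 0], ![-l 1, -l 2, 0, 0, 0, 0]] : Fin 6 → Fin 6 → Rp) 2 3 = -l 1 := rfl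
  have h24 : (![![0, l 3, 0, 0, l 0, l 1], ![-l 3, 0, 0, -l 0, 0, l 2], ![0, 0, 0, -l 1, -l 2, 0], ![0, l 0, l 1, 0, l 4, 0], ![-l 0, 0, l 2, -l 4, 0, 0], ![-l 1, -l 2, 0, 0, 0, 0]] : Fin 6 → Fin 6 → Rp) 2 4 = -l 2 := rfl
  have h25 : (![![0, l 3, 0, 0, l 0, l 1], ![-l 3, 0, 0, -l 0, 0, l 2], ![0, 0, 0, -l 1, -l 2, 0], ![0, l 0, l 1, 0, l 4, 0], ![-l 0, 0, l 2, -l 4, 0, 0], ![-l 1, -l 2, 0, 0, 0, 0]] : Fin 6 → Fin 6 → Rp) 2 5 = 0 := rfl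
  have h34 : (![![0, l 3, 0, 0, l 0, l 1], ![-l 3, 0, 0, -l 0, 0, l 2], ![0, 0, 0, -l 1, -l 2, 0], ![0, l 0, l 1, 0, l 4, 0], ![-l 0, 0, l 2, -l 4, 0, 0], ![-l 1, -l 2, 0, 0, 0, 0]] : Fin 6 → Fin 6 → Rp) 3 4 = l 4 := rfl
  have h35 : (![![0, l 3, 0, 0, l 0, l 1], ![-l 3, 0, 0, -l 0, 0, l 2], ![0, 0, 0, -l 1, -l 2, 0], ![0, l 0, l 1, 0, l 4, 0], ![-l 0, 0, l 2, -l 4, 0, 0], ![-l 1, -l 2, 0, 0, 0, 0]] : Fin 6 → Fin 6 → Rp) 3 5 = 0 := rfl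
  have h45 : (![![0, l 3, 0, 0, l 0, l 1], ![-l 3, 0, 0, -l 0, 0, l 2], ![0, 0, 0, -l 1, -l 2, 0], ![0, l 0, l 1, 0, l 4, 0], ![-l 0, 0, l 2, -l 4, 0, 0], ![-l 1, -l 2, 0, 0, 0, 0]] : Fin 6 → Fin 6 → Rp) 4 5 = 0 := rfl
  rw [h01, h02, h03, h04, h05, h12, h13, h14, h15, h23, h24, h25, h34, h35, h45]
  refine TrivSqZeroExt.ext ?_ ?_
  · simp only [DualNumber.eps, TrivSqZeroExt.fst_mul, TrivSqZeroExt.fst_add,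
      TrivSqZeroExt.fst_inl, TrivSqZeroExt.fst_inr, TrivSqZeroExt.fst_sub, TrivSqZeroExt.fst_zero,
      smul_zero, zero_smul, smul_eq_mul, mul_zero, zero_mul, add_zero, zero_add, sub_zero, mul_one]
    ring
  · simp only [DualNumber.eps, TrivSqZeroExt.fst_mul, TrivSqZeroExt.fst_add,
      TrivSqZeroExt.fst_inl, TrivSqZeroExt.fst_inr, TrivSqZeroExt.snd_mul, TrivSqZeroExt.snd_add,
      TrivSqZeroExt.snd_inl, TrivSqZeroExt.snd_inr, TrivSqZeroExt.snd_sub, TrivSqZeroExt.fst_sub,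
      smul_zero, zero_smul, smul_eq_mul, mul_zero, zero_mul, add_zero, zero_add, sub_zero, mul_one,
      MulOpposite.op_smul, MulOpposite.smul_eq_mul_unop, MulOpposite.unop_op, DD]
    ring

lemma DD_add (l : Fin 5 → Rp) (a b : Matrix (Fin 6) (Fin 6) Rp) :
    DD l (a + b) = DD l a + DD l b := by
  simp only [DD, Matrix.add_apply]
  ring

lemma DD_smul (l : Fin 5 → Rp) (c : ℂ) (a : Matrix (Fin 6) (Fin 6) Rp) :
    DD l (c • a) = c • DD l a := by
  simp only [DD, Matrix.smul_apply, MvPolynomial.smul_eq_C_mul]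
  ring

lemma DD_homog (l : Fin 5 → Rp) (hl : ∀ i, (l i).IsHomogeneous 1)
    {a : Matrix (Fin 6) (Fin 6) Rp} (ha : ∀ i j, (a i j).IsHomogeneous 1) :
    (DD l a).IsHomogeneous 3 :=
  (((((((((((((((hl 2).mul (hl 4)).neg).mul (ha 0 2)).add ((((hl 2).mul (hl 2)).neg).mul (ha 0 3))).add (((hl 1).mul (hl 2)).mul (ha 0 4))).add ((((hl 0).mul (hl 2)).neg).mul (ha 0 5))).add (((hl 1).mul (hl 4)).mul (ha 1 2))).add (((hl 1).mul (hl 2)).mul (ha 1 3))).add ((((hl 1).mul (hl 1)).neg).mul (ha 1 4))).add (((hl 0).mul (hl 1)).mul (ha 1 5))).add ((((hl 0).mul (hl 2)).neg).mul (ha 2 3))).add (((hl 0).mul (hl 1)).mul (ha 2 4))).add ((((hl 3).mul (hl 4)).sub ((hl 0).mul (hl 0))).mul (ha 2 5))).add (((hl 2).mul (hl 3)).mul (ha 3 5))).add ((((hl 1).mul (hl 3)).neg).mul (ha 4 5))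

/-- The linear map `Φ`. -/
def PhiMap (l : Fin 5 → Rp) (hl : ∀ i, (l i).IsHomogeneous 1) : SkewLin →ₗ[ℂ] Cubics where
  toFun a := ⟨DD l a.1, DD_homog l hl a.2.2⟩
  map_add' a b := Subtype.ext (DD_add l a.1 b.1)
  map_smul' c a := Subtype.ext (DD_smul l c a.1)

/-- Elementary skew matrix with `l k` in position `(i,j)`. -/
def Eij (l : Fin 5 → Rp) (i j : Fin 6) (k : Fin 5) : Matrix (Fin 6) (Fin 6) Rp :=
  Matrix.of fun r s => if r = i ∧ s = j then l k else if r = j ∧ s = i then -(l k) else 0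

lemma Eij_mem (l : Fin 5 → Rp) (hl : ∀ i, (l i).IsHomogeneous 1) {i j : Fin 6} (k : Fin 5)
    (hij : i ≠ j) : Eij l i j k ∈ SkewLin := by
  constructor
  · refine Matrix.ext fun r s => ?_
    simp only [Matrix.transpose_apply, Matrix.neg_apply, Eij, Matrix.of_apply]
    split_ifs <;> simp_all
  · intro r s
    simp only [Eij, Matrix.of_apply]
    split_ifs
    · exact hl k
    · exact (hl k).neg
    · exact MvPolynomial.isHomogeneous_zero _ _ _

lemma DD_E_0_2 (l : Fin 5 → Rp) (k : Fin 5) : DD l (Eij l 0 2 k) = -(l 2 * l 4) * l k := by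
  simp (config := { decide := true }) only [DD, Eij, Matrix.of_apply, if_true, if_false,
    and_self, and_true, true_and, mul_zero, add_zero, zero_add, mul_neg, neg_neg, mul_one]
lemma DD_E_0_3 (l : Fin 5 → Rp) (k : Fin 5) : DD l (Eij l 0 3 k) = -(l 2 * l 2) * l k := by
  simp (config := { decide := true }) only [DD, Eij, Matrix.of_apply, if_true, if_false,
    and_self, and_true, true_and, mul_zero, add_zero, zero_add, mul_neg, neg_neg, mul_one]
lemma DD_E_0_4 (l : Fin 5 → Rp) (k : Fin 5) : DD l (Eij l 0 4 k) = l 1 * l 2 * l k := by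
  simp (config := { decide := true }) only [DD, Eij, Matrix.of_apply, if_true, if_false,
    and_self, and_true, true_and, mul_zero, add_zero, zero_add, mul_neg, neg_neg, mul_one]
lemma DD_E_0_5 (l : Fin 5 → Rp) (k : Fin 5) : DD l (Eij l 0 5 k) = -(l 0 * l 2) * l k := by
  simp (config := { decide := true }) only [DD, Eij, Matrix.of_apply, if_true, if_false,
    and_self, and_true, true_and, mul_zero, add_zero, zero_add, mul_neg, neg_neg, mul_one]
lemma DD_E_1_2 (l : Fin 5 → Rp) (k : Fin 5) : DD l (Eij l 1 2 k) = l 1 * l 4 * l k := by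
  simp (config := { decide := true }) only [DD, Eij, Matrix.of_apply, if_true, if_false,
    and_self, and_true, true_and, mul_zero, add_zero, zero_add, mul_neg, neg_neg, mul_one]
lemma DD_E_1_3 (l : Fin 5 → Rp) (k : Fin 5) : DD l (Eij l 1 3 k) = l 1 * l 2 * l k := by
  simp (config := { decide := true }) only [DD, Eij, Matrix.of_apply, if_true, if_false,
    and_self, and_true, true_and, mul_zero, add_zero, zero_add, mul_neg, neg_neg, mul_one]
lemma DD_E_1_4 (l : Fin 5 → Rp) (k : Fin 5) : DD l (Eij l 1 4 k) = -(l 1 * l 1) * l k := by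
  simp (config := { decide := true }) only [DD, Eij, Matrix.of_apply, if_true, if_false,
    and_self, and_true, true_and, mul_zero, add_zero, zero_add, mul_neg, neg_neg, mul_one]
lemma DD_E_1_5 (l : Fin 5 → Rp) (k : Fin 5) : DD l (Eij l 1 5 k) = l 0 * l 1 * l k := by
  simp (config := { decide := true }) only [DD, Eij, Matrix.of_apply, if_true, if_false,
    and_self, and_true, true_and, mul_zero, add_zero, zero_add, mul_neg, neg_neg, mul_one]
lemma DD_E_2_3 (l : Fin 5 → Rp) (k : Fin 5) : DD l (Eij l 2 3 k) = -(l 0 * l 2) * l k := by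
  simp (config := { decide := true }) only [DD, Eij, Matrix.of_apply, if_true, if_false,
    and_self, and_true, true_and, mul_zero, add_zero, zero_add, mul_neg, neg_neg, mul_one]
lemma DD_E_2_4 (l : Fin 5 → Rp) (k : Fin 5) : DD l (Eij l 2 4 k) = l 0 * l 1 * l k := by
  simp (config := { decide := true }) only [DD, Eij, Matrix.of_apply, if_true, if_false,
    and_self, and_true, true_and, mul_zero, add_zero, zero_add, mul_neg, neg_neg, mul_one]
lemma DD_E_2_5 (l : Fin 5 → Rp) (k : Fin 5) : DD l (Eij l 2 5 k) = (l 3 * l 4 - l 0 * l 0) * l k := by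
  simp (config := { decide := true }) only [DD, Eij, Matrix.of_apply, if_true, if_false,
    and_self, and_true, true_and, mul_zero, add_zero, zero_add, mul_neg, neg_neg, mul_one]
lemma DD_E_3_5 (l : Fin 5 → Rp) (k : Fin 5) : DD l (Eij l 3 5 k) = l 2 * l 3 * l k := by
  simp (config := { decide := true }) only [DD, Eij, Matrix.of_apply, if_true, if_false,
    and_self, and_true, true_and, mul_zero, add_zero, zero_add, mul_neg, neg_neg, mul_one]
lemma DD_E_4_5 (l : Fin 5 → Rp) (k : Fin 5) : DD l (Eij l 4 5 k) = -(l 1 * l 3) * l k := by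
  simp (config := { decide := true }) only [DD, Eij, Matrix.of_apply, if_true, if_false,
    and_self, and_true, true_and, mul_zero, add_zero, zero_add, mul_neg, neg_neg, mul_one]

/-- Basis of the tangent-space image. -/
def vE (l : Fin 5 → Rp) : Fin 28 → Rp :=
  ![l 0 * l 0 * l 1,
    l 0 * l 0 * l 2,
    l 0 * l 1 * l 1,
    l 0 * l 1 * l 2,
    l 0 * l 1 * l 3,
    l 0 * l 1 * l 4,
    l 0 * l 2 * l 2,
    l 0 * l 2 * l 3,
    l 0 * l 2 * l 4,
    l 1 * l 1 * l 1,
    l 1 * l 1 * l 2,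
    l 1 * l 1 * l 3,
    l 1 * l 1 * l 4,
    l 1 * l 2 * l 2,
    l 1 * l 2 * l 3,
    l 1 * l 2 * l 4,
    l 1 * l 3 * l 3,
    l 1 * l 3 * l 4,
    l 1 * l 4 * l 4,
    l 2 * l 2 * l 2,
    l 2 * l 2 * l 3,
    l 2 * l 2 * l 4,
    l 2 * l 3 * l 3,
    l 2 * l 3 * l 4,
    l 2 * l 4 * l 4,
    (l 3 * l 4 - l 0 * l 0) * l 0,
    (l 3 * l 4 - l 0 * l 0) * l 3,
    (l 3 * l 4 - l 0 * l 0) * l 4]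

lemma vE_0 (l : Fin 5 → Rp) : vE l 0 = l 0 * l 0 * l 1 := rfl
lemma vE_1 (l : Fin 5 → Rp) : vE l 1 = l 0 * l 0 * l 2 := rfl
lemma vE_2 (l : Fin 5 → Rp) : vE l 2 = l 0 * l 1 * l 1 := rfl
lemma vE_3 (l : Fin 5 → Rp) : vE l 3 = l 0 * l 1 * l 2 := rfl
lemma vE_4 (l : Fin 5 → Rp) : vE l 4 = l 0 * l 1 * l 3 := rfl
lemma vE_5 (l : Fin 5 → Rp) : vE l 5 = l 0 * l 1 * l 4 := rfl
lemma vE_6 (l : Fin 5 → Rp) : vE l 6 = l 0 * l 2 * l 2 := rfl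
lemma vE_7 (l : Fin 5 → Rp) : vE l 7 = l 0 * l 2 * l 3 := rfl
lemma vE_8 (l : Fin 5 → Rp) : vE l 8 = l 0 * l 2 * l 4 := rfl
lemma vE_9 (l : Fin 5 → Rp) : vE l 9 = l 1 * l 1 * l 1 := rfl
lemma vE_10 (l : Fin 5 → Rp) : vE l 10 = l 1 * l 1 * l 2 := rfl
lemma vE_11 (l : Fin 5 → Rp) : vE l 11 = l 1 * l 1 * l 3 := rfl
lemma vE_12 (l : Fin 5 → Rp) : vE l 12 = l 1 * l 1 * l 4 := rfl
lemma vE_13 (l : Fin 5 → Rp) : vE l 13 = l 1 * l 2 * l 2 := rfl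
lemma vE_14 (l : Fin 5 → Rp) : vE l 14 = l 1 * l 2 * l 3 := rfl
lemma vE_15 (l : Fin 5 → Rp) : vE l 15 = l 1 * l 2 * l 4 := rfl
lemma vE_16 (l : Fin 5 → Rp) : vE l 16 = l 1 * l 3 * l 3 := rfl
lemma vE_17 (l : Fin 5 → Rp) : vE l 17 = l 1 * l 3 * l 4 := rfl
lemma vE_18 (l : Fin 5 → Rp) : vE l 18 = l 1 * l 4 * l 4 := rfl
lemma vE_19 (l : Fin 5 → Rp) : vE l 19 = l 2 * l 2 * l 2 := rfl
lemma vE_20 (l : Fin 5 → Rp) : vE l 20 = l 2 * l 2 * l 3 := rfl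
lemma vE_21 (l : Fin 5 → Rp) : vE l 21 = l 2 * l 2 * l 4 := rfl
lemma vE_22 (l : Fin 5 → Rp) : vE l 22 = l 2 * l 3 * l 3 := rfl
lemma vE_23 (l : Fin 5 → Rp) : vE l 23 = l 2 * l 3 * l 4 := rfl
lemma vE_24 (l : Fin 5 → Rp) : vE l 24 = l 2 * l 4 * l 4 := rfl
lemma vE_25 (l : Fin 5 → Rp) : vE l 25 = (l 3 * l 4 - l 0 * l 0) * l 0 := rfl
lemma vE_26 (l : Fin 5 → Rp) : vE l 26 = (l 3 * l 4 - l 0 * l 0) * l 3 := rfl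
lemma vE_27 (l : Fin 5 → Rp) : vE l 27 = (l 3 * l 4 - l 0 * l 0) * l 4 := rfl

def dv : Fin 28 → (Fin 5 → ℕ) :=
  ![![2,1,0,0,0], ![2,0,1,0,0], ![1,2,0,0,0], ![1,1,1,0,0], ![1,1,0,1,0], ![1,1,0,0,1], ![1,0,2,0,0], ![1,0,1,1,0], ![1,0,1,0,1], ![0,3,0,0,0], ![0,2,1,0,0], ![0,2,0,1,0], ![0,2,0,0,1], ![0,1,2,0,0], ![0,1,1,1,0], ![0,1,1,0,1], ![0,1,0,2,0], ![0,1,0,1,1], ![0,1,0,0,2], ![0,0,3,0,0], ![0,0,2,1,0], ![0,0,2,0,1], ![0,0,1,2,0], ![0,0,1,1,1], ![0,0,1,0,2], ![1,0,0,1,1], ![0,0,0,2,1], ![0,0,0,1,2]]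

def emb : Fin 28 → (Fin 5 →₀ ℕ) := fun t => Finsupp.equivFunOnFinite.symm (dv t)

def theta : Rp →ₗ[ℂ] Rp :=
  (MvPolynomial.basisMonomials (Fin 5) ℂ).constr ℂ fun d =>
    if d = Finsupp.equivFunOnFinite.symm ![3,0,0,0,0] ∨
        d = Finsupp.equivFunOnFinite.symm ![2,0,0,1,0] ∨
        d = Finsupp.equivFunOnFinite.symm ![2,0,0,0,1] then 0 else monomial d 1

lemma theta_mexp (f : Fin 5 → ℕ) :
    theta (mexp f) = if f = ![3,0,0,0,0] ∨ f = ![2,0,0,1,0] ∨ f = ![2,0,0,0,1]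
      then (0 : Rp) else mexp f := by
  have h1 : mexp f = (MvPolynomial.basisMonomials (Fin 5) ℂ) (Finsupp.equivFunOnFinite.symm f) := by
    simp only [MvPolynomial.coe_basisMonomials]
    rfl
  rw [h1, theta, Module.Basis.constr_basis]
  simp only [Finsupp.equivFunOnFinite.symm.injective.eq_iff]
  split_ifs <;> rfl

lemma br_0 (l : Fin 5 → Rp) (ψ : Rp →ₐ[ℂ] Rp) (hψ : ∀ i, ψ (l i) = X i) :
    theta (ψ (vE l 0)) = (MvPolynomial.basisMonomials (Fin 5) ℂ) (emb 0) := by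
  rw [vE_0]
  simp (config := { decide := true }) only [_root_.map_mul, _root_.map_sub, sub_mul, hψ, X_eq_mexp, mexp_mul,
    theta_mexp, if_true, if_false, sub_zero, zero_mul, mul_zero,
    MvPolynomial.coe_basisMonomials]
  exact congrArg mexp (by decide)
lemma br_1 (l : Fin 5 → Rp) (ψ : Rp →ₐ[ℂ] Rp) (hψ : ∀ i, ψ (l i) = X i) :
    theta (ψ (vE l 1)) = (MvPolynomial.basisMonomials (Fin 5) ℂ) (emb 1) := by
  rw [vE_1]
  simp (config := { decide := true }) only [_root_.map_mul, _root_.map_sub, sub_mul, hψ, X_eq_mexp, mexp_mul,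
    theta_mexp, if_true, if_false, sub_zero, zero_mul, mul_zero,
    MvPolynomial.coe_basisMonomials]
  exact congrArg mexp (by decide)
lemma br_2 (l : Fin 5 → Rp) (ψ : Rp →ₐ[ℂ] Rp) (hψ : ∀ i, ψ (l i) = X i) :
    theta (ψ (vE l 2)) = (MvPolynomial.basisMonomials (Fin 5) ℂ) (emb 2) := by
  rw [vE_2]
  simp (config := { decide := true }) only [_root_.map_mul, _root_.map_sub, sub_mul, hψ, X_eq_mexp, mexp_mul,
    theta_mexp, if_true, if_false, sub_zero, zero_mul, mul_zero,
    MvPolynomial.coe_basisMonomials]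
  exact congrArg mexp (by decide)
lemma br_3 (l : Fin 5 → Rp) (ψ : Rp →ₐ[ℂ] Rp) (hψ : ∀ i, ψ (l i) = X i) :
    theta (ψ (vE l 3)) = (MvPolynomial.basisMonomials (Fin 5) ℂ) (emb 3) := by
  rw [vE_3]
  simp (config := { decide := true }) only [_root_.map_mul, _root_.map_sub, sub_mul, hψ, X_eq_mexp, mexp_mul,
    theta_mexp, if_true, if_false, sub_zero, zero_mul, mul_zero,
    MvPolynomial.coe_basisMonomials]
  exact congrArg mexp (by decide)
lemma br_4 (l : Fin 5 → Rp) (ψ : Rp →ₐ[ℂ] Rp) (hψ : ∀ i, ψ (l i) = X i) :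
    theta (ψ (vE l 4)) = (MvPolynomial.basisMonomials (Fin 5) ℂ) (emb 4) := by
  rw [vE_4]
  simp (config := { decide := true }) only [_root_.map_mul, _root_.map_sub, sub_mul, hψ, X_eq_mexp, mexp_mul,
    theta_mexp, if_true, if_false, sub_zero, zero_mul, mul_zero,
    MvPolynomial.coe_basisMonomials]
  exact congrArg mexp (by decide)
lemma br_5 (l : Fin 5 → Rp) (ψ : Rp →ₐ[ℂ] Rp) (hψ : ∀ i, ψ (l i) = X i) :
    theta (ψ (vE l 5)) = (MvPolynomial.basisMonomials (Fin 5) ℂ) (emb 5) := by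
  rw [vE_5]
  simp (config := { decide := true }) only [_root_.map_mul, _root_.map_sub, sub_mul, hψ, X_eq_mexp, mexp_mul,
    theta_mexp, if_true, if_false, sub_zero, zero_mul, mul_zero,
    MvPolynomial.coe_basisMonomials]
  exact congrArg mexp (by decide)
lemma br_6 (l : Fin 5 → Rp) (ψ : Rp →ₐ[ℂ] Rp) (hψ : ∀ i, ψ (l i) = X i) :
    theta (ψ (vE l 6)) = (MvPolynomial.basisMonomials (Fin 5) ℂ) (emb 6) := by
  rw [vE_6]
  simp (config := { decide := true }) only [_root_.map_mul, _root_.map_sub, sub_mul, hψ, X_eq_mexp, mexp_mul,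
    theta_mexp, if_true, if_false, sub_zero, zero_mul, mul_zero,
    MvPolynomial.coe_basisMonomials]
  exact congrArg mexp (by decide)
lemma br_7 (l : Fin 5 → Rp) (ψ : Rp →ₐ[ℂ] Rp) (hψ : ∀ i, ψ (l i) = X i) :
    theta (ψ (vE l 7)) = (MvPolynomial.basisMonomials (Fin 5) ℂ) (emb 7) := by
  rw [vE_7]
  simp (config := { decide := true }) only [_root_.map_mul, _root_.map_sub, sub_mul, hψ, X_eq_mexp, mexp_mul,
    theta_mexp, if_true, if_false, sub_zero, zero_mul, mul_zero,
    MvPolynomial.coe_basisMonomials]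
  exact congrArg mexp (by decide)
lemma br_8 (l : Fin 5 → Rp) (ψ : Rp →ₐ[ℂ] Rp) (hψ : ∀ i, ψ (l i) = X i) :
    theta (ψ (vE l 8)) = (MvPolynomial.basisMonomials (Fin 5) ℂ) (emb 8) := by
  rw [vE_8]
  simp (config := { decide := true }) only [_root_.map_mul, _root_.map_sub, sub_mul, hψ, X_eq_mexp, mexp_mul,
    theta_mexp, if_true, if_false, sub_zero, zero_mul, mul_zero,
    MvPolynomial.coe_basisMonomials]
  exact congrArg mexp (by decide)
lemma br_9 (l : Fin 5 → Rp) (ψ : Rp →ₐ[ℂ] Rp) (hψ : ∀ i, ψ (l i) = X i) :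
    theta (ψ (vE l 9)) = (MvPolynomial.basisMonomials (Fin 5) ℂ) (emb 9) := by
  rw [vE_9]
  simp (config := { decide := true }) only [_root_.map_mul, _root_.map_sub, sub_mul, hψ, X_eq_mexp, mexp_mul,
    theta_mexp, if_true, if_false, sub_zero, zero_mul, mul_zero,
    MvPolynomial.coe_basisMonomials]
  exact congrArg mexp (by decide)
lemma br_10 (l : Fin 5 → Rp) (ψ : Rp →ₐ[ℂ] Rp) (hψ : ∀ i, ψ (l i) = X i) :
    theta (ψ (vE l 10)) = (MvPolynomial.basisMonomials (Fin 5) ℂ) (emb 10) := by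
  rw [vE_10]
  simp (config := { decide := true }) only [_root_.map_mul, _root_.map_sub, sub_mul, hψ, X_eq_mexp, mexp_mul,
    theta_mexp, if_true, if_false, sub_zero, zero_mul, mul_zero,
    MvPolynomial.coe_basisMonomials]
  exact congrArg mexp (by decide)
lemma br_11 (l : Fin 5 → Rp) (ψ : Rp →ₐ[ℂ] Rp) (hψ : ∀ i, ψ (l i) = X i) :
    theta (ψ (vE l 11)) = (MvPolynomial.basisMonomials (Fin 5) ℂ) (emb 11) := by
  rw [vE_11]
  simp (config := { decide := true }) only [_root_.map_mul, _root_.map_sub, sub_mul, hψ, X_eq_mexp, mexp_mul,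
    theta_mexp, if_true, if_false, sub_zero, zero_mul, mul_zero,
    MvPolynomial.coe_basisMonomials]
  exact congrArg mexp (by decide)
lemma br_12 (l : Fin 5 → Rp) (ψ : Rp →ₐ[ℂ] Rp) (hψ : ∀ i, ψ (l i) = X i) :
    theta (ψ (vE l 12)) = (MvPolynomial.basisMonomials (Fin 5) ℂ) (emb 12) := by
  rw [vE_12]
  simp (config := { decide := true }) only [_root_.map_mul, _root_.map_sub, sub_mul, hψ, X_eq_mexp, mexp_mul,
    theta_mexp, if_true, if_false, sub_zero, zero_mul, mul_zero,
    MvPolynomial.coe_basisMonomials]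
  exact congrArg mexp (by decide)
lemma br_13 (l : Fin 5 → Rp) (ψ : Rp →ₐ[ℂ] Rp) (hψ : ∀ i, ψ (l i) = X i) :
    theta (ψ (vE l 13)) = (MvPolynomial.basisMonomials (Fin 5) ℂ) (emb 13) := by
  rw [vE_13]
  simp (config := { decide := true }) only [_root_.map_mul, _root_.map_sub, sub_mul, hψ, X_eq_mexp, mexp_mul,
    theta_mexp, if_true, if_false, sub_zero, zero_mul, mul_zero,
    MvPolynomial.coe_basisMonomials]
  exact congrArg mexp (by decide)
lemma br_14 (l : Fin 5 → Rp) (ψ : Rp →ₐ[ℂ] Rp) (hψ : ∀ i, ψ (l i) = X i) :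
    theta (ψ (vE l 14)) = (MvPolynomial.basisMonomials (Fin 5) ℂ) (emb 14) := by
  rw [vE_14]
  simp (config := { decide := true }) only [_root_.map_mul, _root_.map_sub, sub_mul, hψ, X_eq_mexp, mexp_mul,
    theta_mexp, if_true, if_false, sub_zero, zero_mul, mul_zero,
    MvPolynomial.coe_basisMonomials]
  exact congrArg mexp (by decide)
lemma br_15 (l : Fin 5 → Rp) (ψ : Rp →ₐ[ℂ] Rp) (hψ : ∀ i, ψ (l i) = X i) :
    theta (ψ (vE l 15)) = (MvPolynomial.basisMonomials (Fin 5) ℂ) (emb 15) := by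
  rw [vE_15]
  simp (config := { decide := true }) only [_root_.map_mul, _root_.map_sub, sub_mul, hψ, X_eq_mexp, mexp_mul,
    theta_mexp, if_true, if_false, sub_zero, zero_mul, mul_zero,
    MvPolynomial.coe_basisMonomials]
  exact congrArg mexp (by decide)
lemma br_16 (l : Fin 5 → Rp) (ψ : Rp →ₐ[ℂ] Rp) (hψ : ∀ i, ψ (l i) = X i) :
    theta (ψ (vE l 16)) = (MvPolynomial.basisMonomials (Fin 5) ℂ) (emb 16) := by
  rw [vE_16]
  simp (config := { decide := true }) only [_root_.map_mul, _root_.map_sub, sub_mul, hψ, X_eq_mexp, mexp_mul,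
    theta_mexp, if_true, if_false, sub_zero, zero_mul, mul_zero,
    MvPolynomial.coe_basisMonomials]
  exact congrArg mexp (by decide)
lemma br_17 (l : Fin 5 → Rp) (ψ : Rp →ₐ[ℂ] Rp) (hψ : ∀ i, ψ (l i) = X i) :
    theta (ψ (vE l 17)) = (MvPolynomial.basisMonomials (Fin 5) ℂ) (emb 17) := by
  rw [vE_17]
  simp (config := { decide := true }) only [_root_.map_mul, _root_.map_sub, sub_mul, hψ, X_eq_mexp, mexp_mul,
    theta_mexp, if_true, if_false, sub_zero, zero_mul, mul_zero,
    MvPolynomial.coe_basisMonomials]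
  exact congrArg mexp (by decide)
lemma br_18 (l : Fin 5 → Rp) (ψ : Rp →ₐ[ℂ] Rp) (hψ : ∀ i, ψ (l i) = X i) :
    theta (ψ (vE l 18)) = (MvPolynomial.basisMonomials (Fin 5) ℂ) (emb 18) := by
  rw [vE_18]
  simp (config := { decide := true }) only [_root_.map_mul, _root_.map_sub, sub_mul, hψ, X_eq_mexp, mexp_mul,
    theta_mexp, if_true, if_false, sub_zero, zero_mul, mul_zero,
    MvPolynomial.coe_basisMonomials]
  exact congrArg mexp (by decide)
lemma br_19 (l : Fin 5 → Rp) (ψ : Rp →ₐ[ℂ] Rp) (hψ : ∀ i, ψ (l i) = X i) :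
    theta (ψ (vE l 19)) = (MvPolynomial.basisMonomials (Fin 5) ℂ) (emb 19) := by
  rw [vE_19]
  simp (config := { decide := true }) only [_root_.map_mul, _root_.map_sub, sub_mul, hψ, X_eq_mexp, mexp_mul,
    theta_mexp, if_true, if_false, sub_zero, zero_mul, mul_zero,
    MvPolynomial.coe_basisMonomials]
  exact congrArg mexp (by decide)
lemma br_20 (l : Fin 5 → Rp) (ψ : Rp →ₐ[ℂ] Rp) (hψ : ∀ i, ψ (l i) = X i) :
    theta (ψ (vE l 20)) = (MvPolynomial.basisMonomials (Fin 5) ℂ) (emb 20) := by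
  rw [vE_20]
  simp (config := { decide := true }) only [_root_.map_mul, _root_.map_sub, sub_mul, hψ, X_eq_mexp, mexp_mul,
    theta_mexp, if_true, if_false, sub_zero, zero_mul, mul_zero,
    MvPolynomial.coe_basisMonomials]
  exact congrArg mexp (by decide)
lemma br_21 (l : Fin 5 → Rp) (ψ : Rp →ₐ[ℂ] Rp) (hψ : ∀ i, ψ (l i) = X i) :
    theta (ψ (vE l 21)) = (MvPolynomial.basisMonomials (Fin 5) ℂ) (emb 21) := by
  rw [vE_21]
  simp (config := { decide := true }) only [_root_.map_mul, _root_.map_sub, sub_mul, hψ, X_eq_mexp, mexp_mul,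
    theta_mexp, if_true, if_false, sub_zero, zero_mul, mul_zero,
    MvPolynomial.coe_basisMonomials]
  exact congrArg mexp (by decide)
lemma br_22 (l : Fin 5 → Rp) (ψ : Rp →ₐ[ℂ] Rp) (hψ : ∀ i, ψ (l i) = X i) :
    theta (ψ (vE l 22)) = (MvPolynomial.basisMonomials (Fin 5) ℂ) (emb 22) := by
  rw [vE_22]
  simp (config := { decide := true }) only [_root_.map_mul, _root_.map_sub, sub_mul, hψ, X_eq_mexp, mexp_mul,
    theta_mexp, if_true, if_false, sub_zero, zero_mul, mul_zero,
    MvPolynomial.coe_basisMonomials]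
  exact congrArg mexp (by decide)
lemma br_23 (l : Fin 5 → Rp) (ψ : Rp →ₐ[ℂ] Rp) (hψ : ∀ i, ψ (l i) = X i) :
    theta (ψ (vE l 23)) = (MvPolynomial.basisMonomials (Fin 5) ℂ) (emb 23) := by
  rw [vE_23]
  simp (config := { decide := true }) only [_root_.map_mul, _root_.map_sub, sub_mul, hψ, X_eq_mexp, mexp_mul,
    theta_mexp, if_true, if_false, sub_zero, zero_mul, mul_zero,
    MvPolynomial.coe_basisMonomials]
  exact congrArg mexp (by decide)
lemma br_24 (l : Fin 5 → Rp) (ψ : Rp →ₐ[ℂ] Rp) (hψ : ∀ i, ψ (l i) = X i) :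
    theta (ψ (vE l 24)) = (MvPolynomial.basisMonomials (Fin 5) ℂ) (emb 24) := by
  rw [vE_24]
  simp (config := { decide := true }) only [_root_.map_mul, _root_.map_sub, sub_mul, hψ, X_eq_mexp, mexp_mul,
    theta_mexp, if_true, if_false, sub_zero, zero_mul, mul_zero,
    MvPolynomial.coe_basisMonomials]
  exact congrArg mexp (by decide)
lemma br_25 (l : Fin 5 → Rp) (ψ : Rp →ₐ[ℂ] Rp) (hψ : ∀ i, ψ (l i) = X i) :
    theta (ψ (vE l 25)) = (MvPolynomial.basisMonomials (Fin 5) ℂ) (emb 25) := by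
  rw [vE_25]
  simp (config := { decide := true }) only [_root_.map_mul, _root_.map_sub, sub_mul, hψ, X_eq_mexp, mexp_mul,
    theta_mexp, if_true, if_false, sub_zero, zero_mul, mul_zero,
    MvPolynomial.coe_basisMonomials]
  exact congrArg mexp (by decide)
lemma br_26 (l : Fin 5 → Rp) (ψ : Rp →ₐ[ℂ] Rp) (hψ : ∀ i, ψ (l i) = X i) :
    theta (ψ (vE l 26)) = (MvPolynomial.basisMonomials (Fin 5) ℂ) (emb 26) := by
  rw [vE_26]
  simp (config := { decide := true }) only [_root_.map_mul, _root_.map_sub, sub_mul, hψ, X_eq_mexp, mexp_mul,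
    theta_mexp, if_true, if_false, sub_zero, zero_mul, mul_zero,
    MvPolynomial.coe_basisMonomials]
  exact congrArg mexp (by decide)
lemma br_27 (l : Fin 5 → Rp) (ψ : Rp →ₐ[ℂ] Rp) (hψ : ∀ i, ψ (l i) = X i) :
    theta (ψ (vE l 27)) = (MvPolynomial.basisMonomials (Fin 5) ℂ) (emb 27) := by
  rw [vE_27]
  simp (config := { decide := true }) only [_root_.map_mul, _root_.map_sub, sub_mul, hψ, X_eq_mexp, mexp_mul,
    theta_mexp, if_true, if_false, sub_zero, zero_mul, mul_zero,
    MvPolynomial.coe_basisMonomials]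
  exact congrArg mexp (by decide)

lemma vE_indep (l : Fin 5 → Rp) (ψ : Rp →ₐ[ℂ] Rp) (hψ : ∀ i, ψ (l i) = X i) :
    LinearIndependent ℂ (vE l) := by
  apply LinearIndependent.of_comp (theta ∘ₗ ψ.toLinearMap)
  have hdvinj : Function.Injective dv := by decide
  have hcomp : ⇑(theta ∘ₗ ψ.toLinearMap) ∘ vE l
      = ⇑(MvPolynomial.basisMonomials (Fin 5) ℂ) ∘ emb := by
    funext t
    fin_cases t
    · exact br_0 l ψ hψ
    · exact br_1 l ψ hψ
    · exact br_2 l ψ hψ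
    · exact br_3 l ψ hψ
    · exact br_4 l ψ hψ
    · exact br_5 l ψ hψ
    · exact br_6 l ψ hψ
    · exact br_7 l ψ hψ
    · exact br_8 l ψ hψ
    · exact br_9 l ψ hψ
    · exact br_10 l ψ hψ
    · exact br_11 l ψ hψ
    · exact br_12 l ψ hψ
    · exact br_13 l ψ hψ
    · exact br_14 l ψ hψ
    · exact br_15 l ψ hψ
    · exact br_16 l ψ hψ
    · exact br_17 l ψ hψ
    · exact br_18 l ψ hψ
    · exact br_19 l ψ hψ
    · exact br_20 l ψ hψ
    · exact br_21 l ψ hψ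
    · exact br_22 l ψ hψ
    · exact br_23 l ψ hψ
    · exact br_24 l ψ hψ
    · exact br_25 l ψ hψ
    · exact br_26 l ψ hψ
    · exact br_27 l ψ hψ
  rw [hcomp]
  exact (MvPolynomial.basisMonomials (Fin 5) ℂ).linearIndependent.comp emb
    (fun a b h => hdvinj (Finsupp.equivFunOnFinite.symm.injective h))

lemma mem_pos {S : Submodule ℂ Rp} {x y : Rp} (h : x = y) (hy : y ∈ S) : x ∈ S := h ▸ hy

lemma mem_neg {S : Submodule ℂ Rp} {x y : Rp} (h : x = -y) (hy : y ∈ S) : x ∈ S :=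
  h ▸ S.neg_mem hy

lemma mem_sub {S : Submodule ℂ Rp} {x y z : Rp} (h : x = y - z) (hy : y ∈ S) (hz : z ∈ S) :
    x ∈ S := h ▸ sub_mem hy hz

lemma mul_span_l (l : Fin 5 → Rp) {c : Rp} {V : Submodule ℂ Rp} (hc : ∀ k, c * l k ∈ V) :
    ∀ t ∈ Submodule.span ℂ (Set.range l), c * t ∈ V := by
  intro t ht
  induction ht using Submodule.span_induction with
  | mem x h => obtain ⟨k, rfl⟩ := h; exact hc k
  | zero => simpa using V.zero_mem
  | add x y _ _ hx hy => rw [mul_add]; exact V.add_mem hx hy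
  | smul a x _ hx => rw [mul_smul_comm]; exact V.smul_mem a hx

lemma mem_span_l (l : Fin 5 → Rp) (hl : ∀ i, (l i).IsHomogeneous 1)
    (hind : LinearIndependent ℂ l) {p : Rp} (hp : p.IsHomogeneous 1) :
    p ∈ Submodule.span ℂ (Set.range l) := by
  have hXspan : ∀ q : Rp, q.IsHomogeneous 1 →
      q ∈ Submodule.span ℂ (Set.range (X : Fin 5 → Rp)) := by
    intro q hq
    rw [homog_one_eq hq]
    exact Submodule.sum_mem _ fun j _ => Submodule.smul_mem _ _ (Submodule.subset_span ⟨j, rfl⟩)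
  have hle : Submodule.span ℂ (Set.range l) ≤ Submodule.span ℂ (Set.range (X : Fin 5 → Rp)) := by
    rw [Submodule.span_le]
    rintro _ ⟨i, rfl⟩
    exact SetLike.mem_coe.mpr (hXspan _ (hl i))
  haveI : FiniteDimensional ℂ (Submodule.span ℂ (Set.range (X : Fin 5 → Rp))) :=
    FiniteDimensional.span_of_finite ℂ (Set.finite_range _)
  have heq : Submodule.span ℂ (Set.range l) = Submodule.span ℂ (Set.range (X : Fin 5 → Rp)) := by
    apply Submodule.eq_of_le_of_finrank_le hle
    rw [finrank_span_eq_card hind]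
    refine le_trans (finrank_span_le_card _) ?_
    rw [Set.toFinset_range]
    refine le_trans (Finset.card_image_le) ?_
    simp
  rw [heq]
  exact hXspan p hp

lemma cov_0_2 (l : Fin 5 → Rp) :
    ∀ k, -(l 2 * l 4) * l k ∈ Submodule.span ℂ (Set.range (vE l)) := by
  intro k
  fin_cases k
  · exact mem_neg (show -(l 2 * l 4) * l 0 = -(vE l 8) by rw [vE_8]; try ring) (Submodule.subset_span ⟨8, rfl⟩)
  · exact mem_neg (show -(l 2 * l 4) * l 1 = -(vE l 15) by rw [vE_15]; try ring) (Submodule.subset_span ⟨15, rfl⟩)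
  · exact mem_neg (show -(l 2 * l 4) * l 2 = -(vE l 21) by rw [vE_21]; try ring) (Submodule.subset_span ⟨21, rfl⟩)
  · exact mem_neg (show -(l 2 * l 4) * l 3 = -(vE l 23) by rw [vE_23]; try ring) (Submodule.subset_span ⟨23, rfl⟩)
  · exact mem_neg (show -(l 2 * l 4) * l 4 = -(vE l 24) by rw [vE_24]; try ring) (Submodule.subset_span ⟨24, rfl⟩)

lemma cov_0_3 (l : Fin 5 → Rp) :
    ∀ k, -(l 2 * l 2) * l k ∈ Submodule.span ℂ (Set.range (vE l)) := by
  intro k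
  fin_cases k
  · exact mem_neg (show -(l 2 * l 2) * l 0 = -(vE l 6) by rw [vE_6]; try ring) (Submodule.subset_span ⟨6, rfl⟩)
  · exact mem_neg (show -(l 2 * l 2) * l 1 = -(vE l 13) by rw [vE_13]; try ring) (Submodule.subset_span ⟨13, rfl⟩)
  · exact mem_neg (show -(l 2 * l 2) * l 2 = -(vE l 19) by rw [vE_19]; try ring) (Submodule.subset_span ⟨19, rfl⟩)
  · exact mem_neg (show -(l 2 * l 2) * l 3 = -(vE l 20) by rw [vE_20]; try ring) (Submodule.subset_span ⟨20, rfl⟩)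
  · exact mem_neg (show -(l 2 * l 2) * l 4 = -(vE l 21) by rw [vE_21]; try ring) (Submodule.subset_span ⟨21, rfl⟩)

lemma cov_0_4 (l : Fin 5 → Rp) :
    ∀ k, l 1 * l 2 * l k ∈ Submodule.span ℂ (Set.range (vE l)) := by
  intro k
  fin_cases k
  · exact mem_pos (show l 1 * l 2 * l 0 = vE l 3 by rw [vE_3]; try ring) (Submodule.subset_span ⟨3, rfl⟩)
  · exact mem_pos (show l 1 * l 2 * l 1 = vE l 10 by rw [vE_10]; try ring) (Submodule.subset_span ⟨10, rfl⟩)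
  · exact mem_pos (show l 1 * l 2 * l 2 = vE l 13 by rw [vE_13]; try ring) (Submodule.subset_span ⟨13, rfl⟩)
  · exact mem_pos (show l 1 * l 2 * l 3 = vE l 14 by rw [vE_14]; try ring) (Submodule.subset_span ⟨14, rfl⟩)
  · exact mem_pos (show l 1 * l 2 * l 4 = vE l 15 by rw [vE_15]; try ring) (Submodule.subset_span ⟨15, rfl⟩)

lemma cov_0_5 (l : Fin 5 → Rp) :
    ∀ k, -(l 0 * l 2) * l k ∈ Submodule.span ℂ (Set.range (vE l)) := by
  intro k
  fin_cases k
  · exact mem_neg (show -(l 0 * l 2) * l 0 = -(vE l 1) by rw [vE_1]; try ring) (Submodule.subset_span ⟨1, rfl⟩)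
  · exact mem_neg (show -(l 0 * l 2) * l 1 = -(vE l 3) by rw [vE_3]; try ring) (Submodule.subset_span ⟨3, rfl⟩)
  · exact mem_neg (show -(l 0 * l 2) * l 2 = -(vE l 6) by rw [vE_6]; try ring) (Submodule.subset_span ⟨6, rfl⟩)
  · exact mem_neg (show -(l 0 * l 2) * l 3 = -(vE l 7) by rw [vE_7]; try ring) (Submodule.subset_span ⟨7, rfl⟩)
  · exact mem_neg (show -(l 0 * l 2) * l 4 = -(vE l 8) by rw [vE_8]; try ring) (Submodule.subset_span ⟨8, rfl⟩)

lemma cov_1_2 (l : Fin 5 → Rp) :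
    ∀ k, l 1 * l 4 * l k ∈ Submodule.span ℂ (Set.range (vE l)) := by
  intro k
  fin_cases k
  · exact mem_pos (show l 1 * l 4 * l 0 = vE l 5 by rw [vE_5]; try ring) (Submodule.subset_span ⟨5, rfl⟩)
  · exact mem_pos (show l 1 * l 4 * l 1 = vE l 12 by rw [vE_12]; try ring) (Submodule.subset_span ⟨12, rfl⟩)
  · exact mem_pos (show l 1 * l 4 * l 2 = vE l 15 by rw [vE_15]; try ring) (Submodule.subset_span ⟨15, rfl⟩)
  · exact mem_pos (show l 1 * l 4 * l 3 = vE l 17 by rw [vE_17]; try ring) (Submodule.subset_span ⟨17, rfl⟩)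
  · exact mem_pos (show l 1 * l 4 * l 4 = vE l 18 by rw [vE_18]; try ring) (Submodule.subset_span ⟨18, rfl⟩)

lemma cov_1_3 (l : Fin 5 → Rp) :
    ∀ k, l 1 * l 2 * l k ∈ Submodule.span ℂ (Set.range (vE l)) := by
  intro k
  fin_cases k
  · exact mem_pos (show l 1 * l 2 * l 0 = vE l 3 by rw [vE_3]; try ring) (Submodule.subset_span ⟨3, rfl⟩)
  · exact mem_pos (show l 1 * l 2 * l 1 = vE l 10 by rw [vE_10]; try ring) (Submodule.subset_span ⟨10, rfl⟩)
  · exact mem_pos (show l 1 * l 2 * l 2 = vE l 13 by rw [vE_13]; try ring) (Submodule.subset_span ⟨13, rfl⟩)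
  · exact mem_pos (show l 1 * l 2 * l 3 = vE l 14 by rw [vE_14]; try ring) (Submodule.subset_span ⟨14, rfl⟩)
  · exact mem_pos (show l 1 * l 2 * l 4 = vE l 15 by rw [vE_15]; try ring) (Submodule.subset_span ⟨15, rfl⟩)

lemma cov_1_4 (l : Fin 5 → Rp) :
    ∀ k, -(l 1 * l 1) * l k ∈ Submodule.span ℂ (Set.range (vE l)) := by
  intro k
  fin_cases k
  · exact mem_neg (show -(l 1 * l 1) * l 0 = -(vE l 2) by rw [vE_2]; try ring) (Submodule.subset_span ⟨2, rfl⟩)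
  · exact mem_neg (show -(l 1 * l 1) * l 1 = -(vE l 9) by rw [vE_9]; try ring) (Submodule.subset_span ⟨9, rfl⟩)
  · exact mem_neg (show -(l 1 * l 1) * l 2 = -(vE l 10) by rw [vE_10]; try ring) (Submodule.subset_span ⟨10, rfl⟩)
  · exact mem_neg (show -(l 1 * l 1) * l 3 = -(vE l 11) by rw [vE_11]; try ring) (Submodule.subset_span ⟨11, rfl⟩)
  · exact mem_neg (show -(l 1 * l 1) * l 4 = -(vE l 12) by rw [vE_12]; try ring) (Submodule.subset_span ⟨12, rfl⟩)

lemma cov_1_5 (l : Fin 5 → Rp) :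
    ∀ k, l 0 * l 1 * l k ∈ Submodule.span ℂ (Set.range (vE l)) := by
  intro k
  fin_cases k
  · exact mem_pos (show l 0 * l 1 * l 0 = vE l 0 by rw [vE_0]; try ring) (Submodule.subset_span ⟨0, rfl⟩)
  · exact mem_pos (show l 0 * l 1 * l 1 = vE l 2 by rw [vE_2]; try ring) (Submodule.subset_span ⟨2, rfl⟩)
  · exact mem_pos (show l 0 * l 1 * l 2 = vE l 3 by rw [vE_3]; try ring) (Submodule.subset_span ⟨3, rfl⟩)
  · exact mem_pos (show l 0 * l 1 * l 3 = vE l 4 by rw [vE_4]; try ring) (Submodule.subset_span ⟨4, rfl⟩)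
  · exact mem_pos (show l 0 * l 1 * l 4 = vE l 5 by rw [vE_5]; try ring) (Submodule.subset_span ⟨5, rfl⟩)

lemma cov_2_3 (l : Fin 5 → Rp) :
    ∀ k, -(l 0 * l 2) * l k ∈ Submodule.span ℂ (Set.range (vE l)) := by
  intro k
  fin_cases k
  · exact mem_neg (show -(l 0 * l 2) * l 0 = -(vE l 1) by rw [vE_1]; try ring) (Submodule.subset_span ⟨1, rfl⟩)
  · exact mem_neg (show -(l 0 * l 2) * l 1 = -(vE l 3) by rw [vE_3]; try ring) (Submodule.subset_span ⟨3, rfl⟩)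
  · exact mem_neg (show -(l 0 * l 2) * l 2 = -(vE l 6) by rw [vE_6]; try ring) (Submodule.subset_span ⟨6, rfl⟩)
  · exact mem_neg (show -(l 0 * l 2) * l 3 = -(vE l 7) by rw [vE_7]; try ring) (Submodule.subset_span ⟨7, rfl⟩)
  · exact mem_neg (show -(l 0 * l 2) * l 4 = -(vE l 8) by rw [vE_8]; try ring) (Submodule.subset_span ⟨8, rfl⟩)

lemma cov_2_4 (l : Fin 5 → Rp) :
    ∀ k, l 0 * l 1 * l k ∈ Submodule.span ℂ (Set.range (vE l)) := by
  intro k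
  fin_cases k
  · exact mem_pos (show l 0 * l 1 * l 0 = vE l 0 by rw [vE_0]; try ring) (Submodule.subset_span ⟨0, rfl⟩)
  · exact mem_pos (show l 0 * l 1 * l 1 = vE l 2 by rw [vE_2]; try ring) (Submodule.subset_span ⟨2, rfl⟩)
  · exact mem_pos (show l 0 * l 1 * l 2 = vE l 3 by rw [vE_3]; try ring) (Submodule.subset_span ⟨3, rfl⟩)
  · exact mem_pos (show l 0 * l 1 * l 3 = vE l 4 by rw [vE_4]; try ring) (Submodule.subset_span ⟨4, rfl⟩)
  · exact mem_pos (show l 0 * l 1 * l 4 = vE l 5 by rw [vE_5]; try ring) (Submodule.subset_span ⟨5, rfl⟩)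

lemma cov_2_5 (l : Fin 5 → Rp) :
    ∀ k, (l 3 * l 4 - l 0 * l 0) * l k ∈ Submodule.span ℂ (Set.range (vE l)) := by
  intro k
  fin_cases k
  · exact mem_pos (show (l 3 * l 4 - l 0 * l 0) * l 0 = vE l 25 from (vE_25 l).symm) (Submodule.subset_span ⟨25, rfl⟩)
  · exact mem_sub (show (l 3 * l 4 - l 0 * l 0) * l 1 = vE l 17 - vE l 0 by rw [vE_17, vE_0]; try ring) (Submodule.subset_span ⟨17, rfl⟩) (Submodule.subset_span ⟨0, rfl⟩)
  · exact mem_sub (show (l 3 * l 4 - l 0 * l 0) * l 2 = vE l 23 - vE l 1 by rw [vE_23, vE_1]; try ring) (Submodule.subset_span ⟨23, rfl⟩) (Submodule.subset_span ⟨1, rfl⟩)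
  · exact mem_pos (show (l 3 * l 4 - l 0 * l 0) * l 3 = vE l 26 from (vE_26 l).symm) (Submodule.subset_span ⟨26, rfl⟩)
  · exact mem_pos (show (l 3 * l 4 - l 0 * l 0) * l 4 = vE l 27 from (vE_27 l).symm) (Submodule.subset_span ⟨27, rfl⟩)

lemma cov_3_5 (l : Fin 5 → Rp) :
    ∀ k, l 2 * l 3 * l k ∈ Submodule.span ℂ (Set.range (vE l)) := by
  intro k
  fin_cases k
  · exact mem_pos (show l 2 * l 3 * l 0 = vE l 7 by rw [vE_7]; try ring) (Submodule.subset_span ⟨7, rfl⟩)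
  · exact mem_pos (show l 2 * l 3 * l 1 = vE l 14 by rw [vE_14]; try ring) (Submodule.subset_span ⟨14, rfl⟩)
  · exact mem_pos (show l 2 * l 3 * l 2 = vE l 20 by rw [vE_20]; try ring) (Submodule.subset_span ⟨20, rfl⟩)
  · exact mem_pos (show l 2 * l 3 * l 3 = vE l 22 by rw [vE_22]; try ring) (Submodule.subset_span ⟨22, rfl⟩)
  · exact mem_pos (show l 2 * l 3 * l 4 = vE l 23 by rw [vE_23]; try ring) (Submodule.subset_span ⟨23, rfl⟩)

lemma cov_4_5 (l : Fin 5 → Rp) :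
    ∀ k, -(l 1 * l 3) * l k ∈ Submodule.span ℂ (Set.range (vE l)) := by
  intro k
  fin_cases k
  · exact mem_neg (show -(l 1 * l 3) * l 0 = -(vE l 4) by rw [vE_4]; try ring) (Submodule.subset_span ⟨4, rfl⟩)
  · exact mem_neg (show -(l 1 * l 3) * l 1 = -(vE l 11) by rw [vE_11]; try ring) (Submodule.subset_span ⟨11, rfl⟩)
  · exact mem_neg (show -(l 1 * l 3) * l 2 = -(vE l 14) by rw [vE_14]; try ring) (Submodule.subset_span ⟨14, rfl⟩)
  · exact mem_neg (show -(l 1 * l 3) * l 3 = -(vE l 16) by rw [vE_16]; try ring) (Submodule.subset_span ⟨16, rfl⟩)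
  · exact mem_neg (show -(l 1 * l 3) * l 4 = -(vE l 17) by rw [vE_17]; try ring) (Submodule.subset_span ⟨17, rfl⟩)

lemma DD_mem (l : Fin 5 → Rp) (hl : ∀ i, (l i).IsHomogeneous 1)
    (a : Matrix (Fin 6) (Fin 6) Rp) (ha : a ∈ SkewLin) :
    DD l a ∈ Submodule.map Cubics.subtype (LinearMap.range (PhiMap l hl)) :=
  ⟨PhiMap l hl ⟨a, ha⟩, ⟨⟨a, ha⟩, rfl⟩, rfl⟩

lemma map_range_eq (l : Fin 5 → Rp) (hl : ∀ i, (l i).IsHomogeneous 1)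
    (hind : LinearIndependent ℂ l) :
    Submodule.map Cubics.subtype (LinearMap.range (PhiMap l hl))
      = Submodule.span ℂ (Set.range (vE l)) := by
  apply le_antisymm
  · rintro x ⟨y, ⟨a, rfl⟩, rfl⟩
    show DD l a.1 ∈ _
    have hsl : ∀ i j, a.1 i j ∈ Submodule.span ℂ (Set.range l) :=
      fun i j => mem_span_l l hl hind (a.2.2 i j)
    rw [DD_def]
    refine add_mem (add_mem (add_mem (add_mem (add_mem (add_mem (add_mem (add_mem (add_mem (add_mem (add_mem (add_mem ?_ ?_) ?_) ?_) ?_) ?_) ?_) ?_) ?_) ?_) ?_) ?_) ?_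
    exacts [mul_span_l l (cov_0_2 l) _ (hsl 0 2), mul_span_l l (cov_0_3 l) _ (hsl 0 3), mul_span_l l (cov_0_4 l) _ (hsl 0 4), mul_span_l l (cov_0_5 l) _ (hsl 0 5), mul_span_l l (cov_1_2 l) _ (hsl 1 2), mul_span_l l (cov_1_3 l) _ (hsl 1 3), mul_span_l l (cov_1_4 l) _ (hsl 1 4), mul_span_l l (cov_1_5 l) _ (hsl 1 5), mul_span_l l (cov_2_3 l) _ (hsl 2 3), mul_span_l l (cov_2_4 l) _ (hsl 2 4), mul_span_l l (cov_2_5 l) _ (hsl 2 5), mul_span_l l (cov_3_5 l) _ (hsl 3 5), mul_span_l l (cov_4_5 l) _ (hsl 4 5)]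
  · rw [Submodule.span_le]
    rintro _ ⟨t, rfl⟩
    fin_cases t
    · exact SetLike.mem_coe.mpr (mem_pos (show vE l 0 = DD l (Eij l 1 5 0) by rw [vE_0, DD_E_1_5]; try ring) (DD_mem l hl _ (Eij_mem l hl 0 (by decide))))
    · exact SetLike.mem_coe.mpr (mem_neg (show vE l 1 = -(DD l (Eij l 0 5 0)) by rw [vE_1, DD_E_0_5]; try ring) (DD_mem l hl _ (Eij_mem l hl 0 (by decide))))
    · exact SetLike.mem_coe.mpr (mem_pos (show vE l 2 = DD l (Eij l 1 5 1) by rw [vE_2, DD_E_1_5]; try ring) (DD_mem l hl _ (Eij_mem l hl 1 (by decide))))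
    · exact SetLike.mem_coe.mpr (mem_pos (show vE l 3 = DD l (Eij l 1 5 2) by rw [vE_3, DD_E_1_5]; try ring) (DD_mem l hl _ (Eij_mem l hl 2 (by decide))))
    · exact SetLike.mem_coe.mpr (mem_pos (show vE l 4 = DD l (Eij l 1 5 3) by rw [vE_4, DD_E_1_5]; try ring) (DD_mem l hl _ (Eij_mem l hl 3 (by decide))))
    · exact SetLike.mem_coe.mpr (mem_pos (show vE l 5 = DD l (Eij l 1 5 4) by rw [vE_5, DD_E_1_5]; try ring) (DD_mem l hl _ (Eij_mem l hl 4 (by decide))))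
    · exact SetLike.mem_coe.mpr (mem_neg (show vE l 6 = -(DD l (Eij l 0 5 2)) by rw [vE_6, DD_E_0_5]; try ring) (DD_mem l hl _ (Eij_mem l hl 2 (by decide))))
    · exact SetLike.mem_coe.mpr (mem_neg (show vE l 7 = -(DD l (Eij l 0 5 3)) by rw [vE_7, DD_E_0_5]; try ring) (DD_mem l hl _ (Eij_mem l hl 3 (by decide))))
    · exact SetLike.mem_coe.mpr (mem_neg (show vE l 8 = -(DD l (Eij l 0 5 4)) by rw [vE_8, DD_E_0_5]; try ring) (DD_mem l hl _ (Eij_mem l hl 4 (by decide))))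
    · exact SetLike.mem_coe.mpr (mem_neg (show vE l 9 = -(DD l (Eij l 1 4 1)) by rw [vE_9, DD_E_1_4]; try ring) (DD_mem l hl _ (Eij_mem l hl 1 (by decide))))
    · exact SetLike.mem_coe.mpr (mem_neg (show vE l 10 = -(DD l (Eij l 1 4 2)) by rw [vE_10, DD_E_1_4]; try ring) (DD_mem l hl _ (Eij_mem l hl 2 (by decide))))
    · exact SetLike.mem_coe.mpr (mem_neg (show vE l 11 = -(DD l (Eij l 1 4 3)) by rw [vE_11, DD_E_1_4]; try ring) (DD_mem l hl _ (Eij_mem l hl 3 (by decide))))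
    · exact SetLike.mem_coe.mpr (mem_neg (show vE l 12 = -(DD l (Eij l 1 4 4)) by rw [vE_12, DD_E_1_4]; try ring) (DD_mem l hl _ (Eij_mem l hl 4 (by decide))))
    · exact SetLike.mem_coe.mpr (mem_pos (show vE l 13 = DD l (Eij l 0 4 2) by rw [vE_13, DD_E_0_4]; try ring) (DD_mem l hl _ (Eij_mem l hl 2 (by decide))))
    · exact SetLike.mem_coe.mpr (mem_pos (show vE l 14 = DD l (Eij l 0 4 3) by rw [vE_14, DD_E_0_4]; try ring) (DD_mem l hl _ (Eij_mem l hl 3 (by decide))))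
    · exact SetLike.mem_coe.mpr (mem_pos (show vE l 15 = DD l (Eij l 0 4 4) by rw [vE_15, DD_E_0_4]; try ring) (DD_mem l hl _ (Eij_mem l hl 4 (by decide))))
    · exact SetLike.mem_coe.mpr (mem_neg (show vE l 16 = -(DD l (Eij l 4 5 3)) by rw [vE_16, DD_E_4_5]; try ring) (DD_mem l hl _ (Eij_mem l hl 3 (by decide))))
    · exact SetLike.mem_coe.mpr (mem_neg (show vE l 17 = -(DD l (Eij l 4 5 4)) by rw [vE_17, DD_E_4_5]; try ring) (DD_mem l hl _ (Eij_mem l hl 4 (by decide))))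
    · exact SetLike.mem_coe.mpr (mem_pos (show vE l 18 = DD l (Eij l 1 2 4) by rw [vE_18, DD_E_1_2]; try ring) (DD_mem l hl _ (Eij_mem l hl 4 (by decide))))
    · exact SetLike.mem_coe.mpr (mem_neg (show vE l 19 = -(DD l (Eij l 0 3 2)) by rw [vE_19, DD_E_0_3]; try ring) (DD_mem l hl _ (Eij_mem l hl 2 (by decide))))
    · exact SetLike.mem_coe.mpr (mem_neg (show vE l 20 = -(DD l (Eij l 0 3 3)) by rw [vE_20, DD_E_0_3]; try ring) (DD_mem l hl _ (Eij_mem l hl 3 (by decide))))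
    · exact SetLike.mem_coe.mpr (mem_neg (show vE l 21 = -(DD l (Eij l 0 3 4)) by rw [vE_21, DD_E_0_3]; try ring) (DD_mem l hl _ (Eij_mem l hl 4 (by decide))))
    · exact SetLike.mem_coe.mpr (mem_pos (show vE l 22 = DD l (Eij l 3 5 3) by rw [vE_22, DD_E_3_5]; try ring) (DD_mem l hl _ (Eij_mem l hl 3 (by decide))))
    · exact SetLike.mem_coe.mpr (mem_pos (show vE l 23 = DD l (Eij l 3 5 4) by rw [vE_23, DD_E_3_5]; try ring) (DD_mem l hl _ (Eij_mem l hl 4 (by decide))))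
    · exact SetLike.mem_coe.mpr (mem_neg (show vE l 24 = -(DD l (Eij l 0 2 4)) by rw [vE_24, DD_E_0_2]; try ring) (DD_mem l hl _ (Eij_mem l hl 4 (by decide))))
    · exact SetLike.mem_coe.mpr (mem_pos (show vE l 25 = DD l (Eij l 2 5 0) by rw [vE_25, DD_E_2_5]; try ring) (DD_mem l hl _ (Eij_mem l hl 0 (by decide))))
    · exact SetLike.mem_coe.mpr (mem_pos (show vE l 26 = DD l (Eij l 2 5 3) by rw [vE_26, DD_E_2_5]; try ring) (DD_mem l hl _ (Eij_mem l hl 3 (by decide))))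
    · exact SetLike.mem_coe.mpr (mem_pos (show vE l 27 = DD l (Eij l 2 5 4) by rw [vE_27, DD_E_2_5]; try ring) (DD_mem l hl _ (Eij_mem l hl 4 (by decide))))

/-- Proposition 2.4 (Table 2), case (a). -/
theorem tangent_space_type_a
    (l : Fin 5 → Rp) (hl : ∀ i, (l i).IsHomogeneous 1) (hind : LinearIndependent ℂ l)
    (M : Matrix (Fin 6) (Fin 6) Rp)
    (hM : M = !![0, l 3, 0, 0, l 0, l 1;
                 -l 3, 0, 0, -l 0, 0, l 2;
                 0, 0, 0, -l 1, -l 2, 0;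
                 0, l 0, l 1, 0, l 4, 0;
                 -l 0, 0, l 2, -l 4, 0, 0;
                 -l 1, -l 2, 0, 0, 0, 0]) :
    pf M = 0 ∧
    (∀ M' ∈ SkewLin, ∃! F : Rp, F.IsHomogeneous 3 ∧
      pf (jet1 M M') = DualNumber.eps * TrivSqZeroExt.inl F) ∧
    ∃ Φ : SkewLin →ₗ[ℂ] Cubics,
      (∀ M' : SkewLin,
        pf (jet1 M M'.1) = DualNumber.eps * TrivSqZeroExt.inl (Φ M' : Rp)) ∧
      Module.finrank ℂ (LinearMap.range Φ) = 28 := by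
  have hkey : ∀ a, pf (jet1 M a) = DualNumber.eps * TrivSqZeroExt.inl (DD l a) := key l M hM
  obtain ⟨ψ, hψ⟩ := psi_exists l hind (fun i => homog_one_eq (hl i))
  refine ⟨pfM_zero l M hM, ?_, ?_⟩
  · intro M' hM'
    refine ⟨DD l M', ⟨DD_homog l hl hM'.2, hkey M'⟩, ?_⟩
    rintro F ⟨hF1, hF2⟩
    exact eps_inl_inj (hF2.symm.trans (hkey M'))
  · refine ⟨PhiMap l hl, fun M' => hkey M'.1, ?_⟩
    have e1 : Module.finrank ℂ (LinearMap.range (PhiMap l hl))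
        = Module.finrank ℂ (Submodule.map (Cubics.subtype) (LinearMap.range (PhiMap l hl))) :=
      LinearEquiv.finrank_eq (Submodule.equivMapOfInjective (Cubics.subtype)
        (Submodule.injective_subtype Cubics) (LinearMap.range (PhiMap l hl)))
    rw [e1, map_range_eq l hl hind, finrank_span_eq_card (vE_indep l ψ hψ)]
    simp
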